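/- Let F_q be a finite field of characteristic p ≥ 5 and define b_{λ,α} = q^{-1/2}(ω_p^{tr((k+α)³ + λ(k+α))})_{k ∈ F_q}. If α ≠ β in F_q, then |⟨b_{κ,α}, b_{λ,β}⟩|² = 1/q for all κ, λ ∈ F_q; i.e., the bases B_α and B_β are mutually unbiased. -/

import Mathlib

open scoped InnerProductSpace

/-- The Alltop vector `b_{λ,α} = q^{-1/2} (ω_p^{tr((k+α)³ + λ(k+α))})_{k ∈ F_q}`,
where `ω_p = exp(2πi/p)` and `tr` is the absolute trace from `F_q` to `F_p`. -/
noncomputable def alltop (p : ℕ) (F : Type) [Field F] [Fintype F] [Algebra (ZMod p) F]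
    (lam alpha : F) : EuclideanSpace ℂ F :=
  WithLp.toLp 2 (fun k => (1 / Real.sqrt (Fintype.card F) : ℂ) *
    Complex.exp (2 * Real.pi * Complex.I *
      (ZMod.val (Algebra.trace (ZMod p) F ((k + alpha) ^ 3 + lam * (k + alpha))) : ℂ) / p))

/-! Write `ψ x = ω_p ^ tr x`, a primitive additive character of `F_q`. In
`⟨b_{κ,α}, b_{λ,β}⟩ = q⁻¹ ∑ₖ ψ (f k)` the cubic terms cancel, and `f` is a quadratic with leading
coefficient `3(β - α) ≠ 0`. For such `f`, `|∑ ψ (f x)|² = ∑_{x,y} ψ (f x - f y)`; putting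
`x = y + t`, the difference `f (y + t) - f y = f t - f 0 + 2 a t y` is linear in `y`, so as `p ≠ 2`
the sum over `y` vanishes unless `t = 0`, which leaves `q`. -/

namespace AddChar

lemma IsPrimitive.compAddMonoidHom {K L R : Type*} [Field K] [Field L] [CommMonoid R]
    {ψ : AddChar K R} (hψ : ψ.IsPrimitive) {f : L →+ K} (hf : Function.Surjective f) :
    (ψ.compAddMonoidHom f).IsPrimitive := by
  refine IsPrimitive.of_ne_one fun h ↦ hψ one_ne_zero ?_
  ext x
  obtain ⟨y, rfl⟩ := hf x
  simpa using DFunLike.congr_fun h y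

variable {K : Type*} [RCLike K]

lemma sum_mul_conj_sum {G : Type*} [AddCommGroup G] [Fintype G] (ψ : AddChar G K) (f : G → G) :
    (∑ x, ψ (f x)) * starRingEnd K (∑ y, ψ (f y)) = ∑ x, ∑ y, ψ (f x - f y) := by
  simp only [map_sum, Finset.sum_mul_sum, ← map_neg_eq_conj, ← map_add_eq_mul, sub_eq_add_neg]

lemma norm_sq_sum_quadratic {F : Type*} [Field F] [Fintype F] {ψ : AddChar F K}
    (hψ : ψ.IsPrimitive) (h2 : (2 : F) ≠ 0) {a : F} (ha : a ≠ 0) (b c : F) :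
    ‖∑ x, ψ (a * x ^ 2 + b * x + c)‖ ^ 2 = Fintype.card F := by
  classical
  set f : F → F := fun x ↦ a * x ^ 2 + b * x + c
  have hdiff : ∀ y t, f (t + y) - f y = (a * t ^ 2 + b * t) + y * (2 * a * t) := fun y t ↦ by
    simp only [f]; ring
  have hsum : ∑ x, ∑ y, ψ (f x - f y) = Fintype.card F := calc
    ∑ x, ∑ y, ψ (f x - f y) = ∑ y, ∑ t, ψ (f (t + y) - f y) := by
      rw [Finset.sum_comm]
      exact Finset.sum_congr rfl fun y _ ↦ (Equiv.sum_comp (Equiv.addRight y) _).symm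
    _ = ∑ t, ψ (a * t ^ 2 + b * t) * ∑ y, ψ (y * (2 * a * t)) := by
      simp only [hdiff, map_add_eq_mul, Finset.mul_sum]
      exact Finset.sum_comm
    _ = Fintype.card F := by
      simp [sum_mulShift _ hψ, h2, ha]
  exact_mod_cast (RCLike.mul_conj _).symm.trans ((sum_mul_conj_sum ψ f).trans hsum)

end AddChar

namespace FiniteField

variable (p : ℕ) [Fact p.Prime] (F : Type*) [Field F] [Algebra (ZMod p) F]

noncomputable def traceAddChar : AddChar F ℂ :=
  ZMod.stdAddChar.compAddMonoidHom (Algebra.trace (ZMod p) F).toAddMonoidHom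

lemma traceAddChar_apply (x : F) : traceAddChar p F x =
    Complex.exp (2 * Real.pi * Complex.I * (ZMod.val (Algebra.trace (ZMod p) F x) : ℂ) / p) :=
  ZMod.toCircle_apply _

lemma isPrimitive_traceAddChar [Finite F] : (traceAddChar p F).IsPrimitive :=
  (ZMod.isPrimitive_stdAddChar p).compAddMonoidHom <|
    haveI : FiniteDimensional (ZMod p) F := .of_finite
    Algebra.trace_surjective (ZMod p) F

lemma natCast_ne_zero_of_lt {n : ℕ} (hn0 : n ≠ 0) (hnp : n < p) : (n : F) ≠ 0 := by
  rw [← map_natCast (algebraMap (ZMod p) F), map_ne_zero, Ne, ZMod.natCast_eq_zero_iff]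
  exact Nat.not_dvd_of_pos_of_lt (Nat.pos_of_ne_zero hn0) hnp

end FiniteField

open FiniteField

section

variable {p : ℕ} [Fact p.Prime] {F : Type} [Field F] [Fintype F] [Algebra (ZMod p) F]

lemma alltop_apply (lam alpha k : F) :
    alltop p F lam alpha k = (Real.sqrt (Fintype.card F) : ℂ)⁻¹ *
      traceAddChar p F ((k + alpha) ^ 3 + lam * (k + alpha)) := by
  rw [traceAddChar_apply, ← one_div]
  rfl

lemma inner_alltop (kappa lam alpha beta : F) :
    ⟪alltop p F kappa alpha, alltop p F lam beta⟫_ℂ = (Fintype.card F : ℂ)⁻¹ *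
      ∑ k, traceAddChar p F (3 * (beta - alpha) * k ^ 2 +
        (3 * (beta ^ 2 - alpha ^ 2) + lam - kappa) * k +
        (beta ^ 3 - alpha ^ 3 + lam * beta - kappa * alpha)) := by
  have hq : ((Real.sqrt (Fintype.card F) : ℂ)⁻¹) ^ 2 = (Fintype.card F : ℂ)⁻¹ := by
    rw [inv_pow, ← Complex.ofReal_pow, Real.sq_sqrt (Nat.cast_nonneg _), Complex.ofReal_natCast]
  rw [PiLp.inner_apply, Finset.mul_sum]
  refine Finset.sum_congr rfl fun k _ ↦ ?_
  rw [RCLike.inner_apply', alltop_apply, alltop_apply, map_mul, ← AddChar.map_neg_eq_conj,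
    map_inv₀, Complex.conj_ofReal, ← hq, mul_mul_mul_comm, ← AddChar.map_add_eq_mul, sq]
  congr 2
  ring

end

/-- For `F_q` of characteristic `p ≥ 5` and `α ≠ β`, the bases `B_α` and `B_β`
are mutually unbiased: `|⟨b_{κ,α}, b_{λ,β}⟩|² = 1/q` for all `κ, λ ∈ F_q`. -/
theorem alltop_mutually_unbiased (p : ℕ) [Fact p.Prime] (hp : 5 ≤ p)
    (F : Type) [Field F] [Fintype F] [Algebra (ZMod p) F]
    (alpha beta : F) (hab : alpha ≠ beta) (kappa lam : F) :
    ‖⟪alltop p F kappa alpha, alltop p F lam beta⟫_ℂ‖ ^ 2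
      = 1 / Fintype.card F := by
  have h2 : (2 : F) ≠ 0 := mod_cast natCast_ne_zero_of_lt p F (n := 2) two_ne_zero (by omega)
  have h3 : (3 : F) ≠ 0 := mod_cast natCast_ne_zero_of_lt p F (n := 3) three_ne_zero (by omega)
  have ha : 3 * (beta - alpha) ≠ 0 := mul_ne_zero h3 (sub_ne_zero.mpr hab.symm)
  have hq : (Fintype.card F : ℝ) ≠ 0 := Nat.cast_ne_zero.mpr Fintype.card_ne_zero
  rw [inner_alltop, norm_mul, mul_pow,
    AddChar.norm_sq_sum_quadratic (isPrimitive_traceAddChar p F) h2 ha, norm_inv,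
    Complex.norm_natCast]
  field_simp
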